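/- Fix ν_s > 0 and let 0 < ν_d ≤ ν_d′ be such that âₑ(ν_d,ν_s) > 0. Then âₑ(ν_d′,ν_s) > 0 and b̂ₑ(ν_d′)/âₑ(ν_d′,ν_s) ≤ b̂ₑ(ν_d)/âₑ(ν_d,ν_s); i.e., the ratio b̂ₑ/âₑ is monotonically decreasing in the true decoy intensity ν_d on the region where âₑ is positive. -/
import Mathlib


/-- Estimate `b̂ₑ` with true decoy intensity `νd` and assumed decoy intensity `μd`. -/
noncomputable def bE (α s p₀ μd νd : ℝ) : ℝ :=
  ((s * (1 - Real.exp (-α * νd)) + p₀ / 2) * Real.exp μd - p₀ / 2) / μd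

/-- Estimate `âₑ` with true intensities `νd, νs` and assumed intensities `μd, μs`. -/
noncomputable def aE (α p₀ μd μs νd νs : ℝ) : ℝ :=
  (μs ^ 2 * Real.exp μd * ((1 - Real.exp (-α * νd)) + p₀ * (1 - Real.exp (-μd)))
    - μd ^ 2 * Real.exp μs * ((1 - Real.exp (-α * νs)) + p₀ * (1 - Real.exp (-μs))))
  / (μd * μs * (μs - μd))

private lemma ratio_helper (A B C D x x' p q : ℝ) (hp : 0 < p) (hq : 0 < q)
    (hx : x ≤ x') (hC : 0 < C) (hAD : A * D ≤ B * C)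
    (hpos : 0 < C * x + D) :
    0 < (C * x' + D) / q ∧
    ((A * x' + B) / p) / ((C * x' + D) / q) ≤ ((A * x + B) / p) / ((C * x + D) / q) := by
  have h2 : 0 < C * x' + D := by nlinarith
  refine ⟨div_pos h2 hq, ?_⟩
  rw [div_le_div_iff₀ (div_pos h2 hq) (div_pos hpos hq), div_mul_div_comm, div_mul_div_comm,
    div_le_div_iff₀ (by positivity) (by positivity)]
  nlinarith [mul_nonneg (mul_nonneg (sub_nonneg.2 hx) (sub_nonneg.2 hAD))
    (mul_pos hp hq).le]

set_option maxHeartbeats 800000 in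
theorem stmt13 (α s p₀ μd μs νs νd νd' : ℝ)
    (hα : 0 < α) (hα1 : α ≤ 1) (hs0 : 0 ≤ s) (hs : s ≤ 1 / 2) (hp : 0 < p₀)
    (hμd : 0 < μd) (hμ : μd < μs) (hνs : 0 < νs)
    (hνd : 0 < νd) (hνd' : νd ≤ νd')
    (hpos : 0 < aE α p₀ μd μs νd νs) :
    0 < aE α p₀ μd μs νd' νs ∧
    bE α s p₀ μd νd' / aE α p₀ μd μs νd' νs ≤ bE α s p₀ μd νd / aE α p₀ μd μs νd νs := by
  have hμs : 0 < μs := hμd.trans hμ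
  set A := s * Real.exp μd with hA
  set B := p₀ / 2 * (Real.exp μd - 1) with hB
  set C := μs ^ 2 * Real.exp μd with hC
  set D := C * (p₀ * (1 - Real.exp (-μd)))
    - μd ^ 2 * Real.exp μs * ((1 - Real.exp (-α * νs)) + p₀ * (1 - Real.exp (-μs))) with hD
  set den := μd * μs * (μs - μd) with hden
  set x := 1 - Real.exp (-α * νd) with hx
  set x' := 1 - Real.exp (-α * νd') with hx'
  have hdenpos : 0 < den := by
    rw [hden]; apply mul_pos (mul_pos hμd hμs); linarith
  have hCpos : 0 < C := by rw [hC]; positivity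
  have hxx : x ≤ x' := by
    have : Real.exp (-α * νd') ≤ Real.exp (-α * νd) :=
      Real.exp_le_exp.mpr (by nlinarith)
    rw [hx, hx']; linarith
  have haE : ∀ t : ℝ, aE α p₀ μd μs t νs =
      (C * (1 - Real.exp (-α * t)) + D) / den := by
    intro t
    rw [aE, hD, hC, hden]; ring_nf
  have hbE : ∀ t : ℝ, bE α s p₀ μd t =
      (A * (1 - Real.exp (-α * t)) + B) / μd := by
    intro t
    rw [bE, hA, hB]; ring_nf
  -- key inequality A * D ≤ B * C
  have hexp1 : (1 : ℝ) ≤ Real.exp μd := Real.one_le_exp hμd.le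
  have hmul : Real.exp μd * Real.exp (-μd) = 1 := by
    rw [← Real.exp_add]; simp
  have hM : 0 < μd ^ 2 * Real.exp μs *
      ((1 - Real.exp (-α * νs)) + p₀ * (1 - Real.exp (-μs))) := by
    have h1 : Real.exp (-α * νs) < 1 := by
      rw [Real.exp_lt_one_iff]; nlinarith
    have h2 : Real.exp (-μs) < 1 := by
      rw [Real.exp_lt_one_iff]; linarith
    have : 0 < (1 - Real.exp (-α * νs)) + p₀ * (1 - Real.exp (-μs)) := by nlinarith
    positivity
  have hexpd : 0 < Real.exp μd := Real.exp_pos μd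
  have habs : ∀ E F Cv Mv : ℝ, 0 < Cv → 0 ≤ Mv → 1 ≤ E → E * F = 1 →
      s * E * (Cv * (p₀ * (1 - F)) - Mv) ≤ p₀ / 2 * (E - 1) * Cv := by
    intro E F Cv Mv hCv hMv hE hEF
    have key : s * E * (Cv * (p₀ * (1 - F))) = s * p₀ * Cv * (E - E * F) := by ring
    rw [hEF] at key
    nlinarith [mul_nonneg (mul_nonneg hs0 (by linarith : (0:ℝ) ≤ E)) hMv,
      mul_nonneg (mul_nonneg (by linarith : (0:ℝ) ≤ 1 / 2 - s) hp.le)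
        (mul_nonneg hCv.le (by linarith : (0:ℝ) ≤ E - 1))]
  have hAD : A * D ≤ B * C := by
    rw [hA, hB, hD]
    have := habs (Real.exp μd) (Real.exp (-μd)) C
      (μd ^ 2 * Real.exp μs * ((1 - Real.exp (-α * νs)) + p₀ * (1 - Real.exp (-μs))))
      hCpos hM.le hexp1 hmul
    linarith [this]
  have hpos' : 0 < C * x + D := by
    rw [haE νd, ← hx] at hpos
    have := mul_pos hpos hdenpos
    rwa [div_mul_cancel₀ _ hdenpos.ne'] at this
  obtain ⟨h1, h2⟩ := ratio_helper A B C D x x' μd den hμd hdenpos hxx hCpos hAD hpos'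
  rw [haE νd, haE νd', hbE νd, hbE νd', ← hx, ← hx']
  exact ⟨h1, h2⟩
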